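/- If L is the n-component unlink, then vb(L) = n. -/

import Mathlib

/-- A symbol in a Gauss code: an over- or under-crossing passage, with a chord
label and a sign. Arrowtails of the Gauss diagram correspond to over-symbols,
arrowheads to under-symbols. -/
inductive GSym : Type
  | over (label : ℕ) (sign : Bool)
  | under (label : ℕ) (sign : Bool)
deriving DecidableEq, Repr

namespace GSym
def isOver : GSym → Bool | GSym.over _ _ => true | _ => false
def isUnder : GSym → Bool | under _ _ => true | _ => false
def label : GSym → ℕ | GSym.over n _ => n | under n _ => n
end GSym

/-- A Gauss code: a finite list of circles, each a cyclic word of symbols. -/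
abbrev GCode := List (List GSym)

namespace GCode

/-- Validity: every chord label that occurs does so exactly once as an over
symbol and once as an under symbol, with matching signs. -/
def Valid (g : GCode) : Prop :=
  ∀ (n : ℕ) (s : Bool),
    g.flatten.count (GSym.over n s) = g.flatten.count (GSym.under n s) ∧
    g.flatten.count (GSym.over n s) + g.flatten.count (GSym.over n (!s)) ≤ 1

/-- The number of overbridges (strands between consecutive arrowheads that
contain at least one arrowtail) on one circle. -/
def circleBridges (w : List GSym) : ℕ :=
  if w.any GSym.isUnder then
    ((w.rotate (w.findIdx GSym.isUnder)).splitOnP GSym.isUnder).countP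
      (fun b => b.any GSym.isOver)
  else if w.any GSym.isOver then 1 else 0

/-- The bridge number of a Gauss code: the total number of overbridges. -/
def vb (g : GCode) : ℕ := (g.map circleBridges).sum

/-- Fill a context with `m` holes by the given blocks of symbols. -/
def fill {m : ℕ} (C : List (List (GSym ⊕ Fin m))) (f : Fin m → List GSym) : GCode :=
  C.map fun w => w.flatMap fun x => match x with
    | Sum.inl a => [a]
    | Sum.inr i => f i

/-- A context has exactly one occurrence of each hole. -/
def IsContext {m : ℕ} (C : List (List (GSym ⊕ Fin m))) : Prop :=
  ∀ i : Fin m, C.flatten.count (Sum.inr i) = 1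

open GSym in
/-- Reidemeister moves on Gauss codes, together with the structural moves of
permuting the circles, rotating a cyclic word, and injectively relabelling the
chords. -/
inductive RMove : GCode → GCode → Prop
  | perm {g g' : GCode} : List.Perm g g' → RMove g g'
  | rotate (a b : List GSym) (rest : GCode) : RMove ((a ++ b) :: rest) ((b ++ a) :: rest)
  | relabel (g : GCode) (f : ℕ → ℕ) (hf : Function.Injective f) :
      RMove g (g.map (List.map fun x => match x with
        | GSym.over n s => GSym.over (f n) s
        | under n s => under (f n) s))
  | r1 (C : List (List (GSym ⊕ Fin 1))) (hC : IsContext C) (n : ℕ) (s : Bool) :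
      RMove (fill C ![[GSym.over n s, under n s]]) (fill C ![[]])
  | r1' (C : List (List (GSym ⊕ Fin 1))) (hC : IsContext C) (n : ℕ) (s : Bool) :
      RMove (fill C ![[under n s, GSym.over n s]]) (fill C ![[]])
  | r2 (C : List (List (GSym ⊕ Fin 2))) (hC : IsContext C) (n m' : ℕ) (s : Bool) :
      RMove (fill C ![[GSym.over n s, GSym.over m' (!s)], [under m' (!s), under n s]])
            (fill C ![[], []])
  | r2' (C : List (List (GSym ⊕ Fin 2))) (hC : IsContext C) (n m' : ℕ) (s : Bool) :
      RMove (fill C ![[GSym.over n s, GSym.over m' (!s)], [under n s, under m' (!s)]])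
            (fill C ![[], []])
  | r3 (C : List (List (GSym ⊕ Fin 3))) (hC : IsContext C) (a b c : ℕ) :
      RMove (fill C ![[GSym.over a true, GSym.over b true],
                      [under a true, GSym.over c true],
                      [under b true, under c true]])
            (fill C ![[GSym.over b true, GSym.over a true],
                      [GSym.over c true, under a true],
                      [under c true, under b true]])

/-- Equivalence of Gauss codes under the Reidemeister moves. -/
def REquiv : GCode → GCode → Prop := Relation.EqvGen RMove

/-- The cyclic word of circle `c`. -/
def circ (g : GCode) (c : ℕ) : List GSym := g.getD c []

/-- The symbol at position `i` of circle `c`. -/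
def symAt (g : GCode) (c i : ℕ) : Option GSym := (g.circ c)[i]?

/-- The representative position of the strand containing position `i` of circle
`c`: the position of the first under-symbol at or (cyclically) after `i`.  On a
circle with no under-symbols every position represents the unique strand `0`. -/
def strandRep (g : GCode) (c i : ℕ) : ℕ :=
  let w := g.circ c
  if w.any GSym.isUnder then (i + (w.rotate i).findIdx GSym.isUnder) % w.length else 0

/-- A coloring move on a Gauss code: a partial coloring assigns an optional
color to each strand representative `(circle, position)`; the color of a strand
may be extended across an arrowhead whose chord's arrowtail lies on an already
colored strand. -/
def CMove (g : GCode) {k : ℕ} (f f' : ℕ → ℕ → Option (Fin k)) : Prop :=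
  ∃ (n : ℕ) (s : Bool) (co io cu iu ap aq : ℕ),
    g.symAt co io = some (GSym.over n s) ∧
    g.symAt cu iu = some (GSym.under n s) ∧
    ((ap = iu ∧ aq = g.strandRep cu (iu + 1)) ∨ (aq = iu ∧ ap = g.strandRep cu (iu + 1))) ∧
    ap ≠ aq ∧
    (f co (g.strandRep co io)).isSome ∧ (f cu ap).isSome ∧ f cu aq = none ∧
    f' = fun c i => if c = cu ∧ i = aq then f cu ap else f c i

/-- `g` is `k`-meridionally colorable: `k` seed strands receive the `k`
distinct colors and a finite sequence of coloring moves colors every strand. -/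
def Colorable (g : GCode) (k : ℕ) : Prop :=
  ∃ (m : ℕ) (F : ℕ → ℕ → ℕ → Option (Fin k)) (seeds : Fin k → ℕ × ℕ),
    (∀ t : Fin k, (seeds t).1 < g.length ∧ (seeds t).2 < (g.circ (seeds t).1).length ∧
      g.strandRep (seeds t).1 (seeds t).2 = (seeds t).2 ∧
      F 0 (seeds t).1 (seeds t).2 = some t) ∧
    (∀ c i : ℕ, (F 0 c i).isSome → ∃ t : Fin k, seeds t = (c, i)) ∧
    (∀ j < m, CMove g (F j) (F (j + 1))) ∧
    (∀ c < g.length, ∀ i < (g.circ c).length, (F m c (g.strandRep c i)).isSome)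

/-- The Wirtinger number of a Gauss code. -/
noncomputable def wirt (g : GCode) : ℕ := sInf {k | Colorable g k}

end GCode

open GCode in
/-- A Gauss code of the `n`-component unlink: `n` circles, each carrying a
single Reidemeister-I kink. -/
def unlinkCode (n : ℕ) : GCode :=
  (List.range n).map fun i => [GSym.over i true, GSym.under i true]

/-! Every move preserves the number of circles, and a circle carrying an arrowtail has at least
one overbridge, so any admissible diagram of the `n`-component unlink has at least `n`
overbridges; the standard diagram, one kink per circle, has exactly `n`. -/

namespace List

theorem flatten_splitOnP {α : Type*} (p : α → Bool) (l : List α) :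
    (l.splitOnP p).flatten = l.filter (fun a => !p a) := by
  induction l with
  | nil => simp
  | cons x xs ih =>
    rw [splitOnP_cons_eq_if_modifyHead]
    obtain ⟨b, bs, hbs⟩ := exists_cons_of_ne_nil (splitOnP_ne_nil p xs)
    by_cases hx : p x <;> simp_all

theorem countP_any_splitOnP_pos {α : Type*} {p q : α → Bool} {l : List α}
    (h : ∃ a ∈ l, p a = false ∧ q a) : 0 < (l.splitOnP p).countP (fun b => b.any q) := by
  obtain ⟨a, hal, hpa, hqa⟩ := h
  have : a ∈ (l.splitOnP p).flatten := by simp [flatten_splitOnP, hal, hpa]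
  obtain ⟨b, hb, hab⟩ := mem_flatten.mp this
  exact countP_pos_iff.mpr ⟨b, hb, any_eq_true.mpr ⟨a, hab, hqa⟩⟩

end List

namespace GSym

theorem isUnder_eq_false_of_isOver {a : GSym} (h : a.isOver) : a.isUnder = false := by
  cases a <;> simp_all [isOver, isUnder]

end GSym

namespace GCode

@[simp]
theorem length_fill {m : ℕ} (C : List (List (GSym ⊕ Fin m))) (f : Fin m → List GSym) :
    (fill C f).length = C.length := by
  simp [fill]

theorem RMove.length_eq {g g' : GCode} (h : RMove g g') : g.length = g'.length := by
  cases h with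
  | perm h => exact h.length_eq
  | _ => simp

theorem REquiv.length_eq {g g' : GCode} (h : REquiv g g') : g.length = g'.length := by
  induction h with
  | rel _ _ h => exact h.length_eq
  | refl => rfl
  | symm _ _ _ ih => exact ih.symm
  | trans _ _ _ _ _ ih₁ ih₂ => exact ih₁.trans ih₂

theorem one_le_circleBridges {w : List GSym} (h : w.any GSym.isOver) :
    1 ≤ circleBridges w := by
  unfold circleBridges
  split_ifs with hunder
  · obtain ⟨a, ha, hover⟩ := List.any_eq_true.mp h
    refine List.countP_any_splitOnP_pos ⟨a, ?_, GSym.isUnder_eq_false_of_isOver hover, hover⟩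
    exact (List.rotate_perm w _).mem_iff.mpr ha
  · exact le_rfl

theorem length_le_vb {g : GCode} (h : ∀ w ∈ g, w.any GSym.isOver) : g.length ≤ vb g := by
  simpa [vb] using List.length_le_sum_of_one_le (g.map circleBridges)
    (by simpa using fun w hw => one_le_circleBridges (h w hw))

theorem circleBridges_kink (i : ℕ) (s : Bool) :
    circleBridges [GSym.over i s, GSym.under i s] = 1 :=
  rfl

end GCode

open GCode

@[simp]
theorem length_unlinkCode (n : ℕ) : (unlinkCode n).length = n := by
  simp [unlinkCode]

theorem unlinkCode_any_isOver (n : ℕ) : ∀ w ∈ unlinkCode n, w.any GSym.isOver := by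
  simp [unlinkCode, GSym.isOver]

theorem vb_unlinkCode (n : ℕ) : vb (unlinkCode n) = n := by
  simp [vb, unlinkCode, Function.comp_def, circleBridges_kink]

open GCode in
/-- The virtual bridge number of the `n`-component unlink is `n`. -/
theorem vb_unlink (n : ℕ) :
    sInf {k | ∃ g' : GCode, REquiv (unlinkCode n) g' ∧
      (∀ w ∈ g', w.any GSym.isOver) ∧ vb g' = k} = n := by
  refine IsLeast.csInf_eq ⟨⟨unlinkCode n, .refl _, unlinkCode_any_isOver n, vb_unlinkCode n⟩, ?_⟩
  rintro k ⟨g', hequiv, hover, rfl⟩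
  calc n = g'.length := by rw [← hequiv.length_eq, length_unlinkCode]
    _ ≤ vb g' := length_le_vb hover
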